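/- Let A ⊆ B(H) be an operator algebra with contractive approximate identity and M ⊆ B(H,K) a norm-closed ternary ring of operators (M M* M ⊆ M) such that M* M A ⊆ A and A M* M ⊆ A. Then B := the closed linear span of M A M* is a norm-closed subalgebra of B(K), and A₀ := the closed linear span of M* B M is a norm-closed subalgebra of B(H). -/

import Mathlib

/-!
Both products reduce to the generators. For `B`,
`(m a n*)(m' a' n'*) = m ((a (n* m')) a') n'*` lies in `M A M*` because `A M* M ⊆ A`. For `A₀`,
`(m* b n)(m'* b' n') = m* ((b (n m'*)) b') n'`, and `b (n m'*) ∈ B` since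
`(m₁ a m₂*)(n m'*) = m₁ (a (m₂* n)) m'*`, so `B M M* ⊆ B`. Continuity of multiplication passes
the inclusions from the linear spans of the generators to their closures.
-/

open Filter Topology ContinuousLinearMap

/-- The norm-closed linear span of a set of operators. -/
noncomputable def clspan {H K : Type*} [NormedAddCommGroup H] [InnerProductSpace ℂ H]
    [NormedAddCommGroup K] [InnerProductSpace ℂ K] (S : Set (H →L[ℂ] K)) : Set (H →L[ℂ] K) :=
  closure ((Submodule.span ℂ S : Submodule ℂ (H →L[ℂ] K)) : Set (H →L[ℂ] K))

theorem Submodule.mul_mem_closure_span {R A : Type*} [CommSemiring R] [Semiring A] [Algebra R A]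
    [TopologicalSpace A] [ContinuousMul A] {s t u : Set A}
    (h : ∀ a ∈ s, ∀ b ∈ t, a * b ∈ span R u) {x y : A}
    (hx : x ∈ closure (span R s : Set A)) (hy : y ∈ closure (span R t : Set A)) :
    x * y ∈ closure (span R u : Set A) := by
  have hspan : span R s * span R t ≤ span R u := by
    rw [span_mul_span, span_le]
    rintro _ ⟨a, ha, b, hb, rfl⟩
    exact h a ha b hb
  exact map_mem_closure₂ continuous_mul hx hy fun a ha b hb => hspan (mul_mem_mul ha hb)

section Sandwich

variable {H K : Type*} [NormedAddCommGroup H] [InnerProductSpace ℂ H] [CompleteSpace H]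
  [NormedAddCommGroup K] [InnerProductSpace ℂ K] [CompleteSpace K]

/-- The products `m a n*` spanning `M A M*`. -/
def sandwiches (M : Set (H →L[ℂ] K)) (A : Set (H →L[ℂ] H)) : Set (K →L[ℂ] K) :=
  {x | ∃ m ∈ M, ∃ a ∈ A, ∃ n ∈ M, x = m ∘L a ∘L adjoint n}

/-- The products `m* b n` spanning `M* B M`. -/
def adjointSandwiches (M : Set (H →L[ℂ] K)) (B : Set (K →L[ℂ] K)) : Set (H →L[ℂ] H) :=
  {x | ∃ m ∈ M, ∃ b ∈ B, ∃ n ∈ M, x = adjoint m ∘L b ∘L n}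

variable {M : Set (H →L[ℂ] K)} {A : Set (H →L[ℂ] H)}

theorem comp_mem_clspan_sandwiches (hAm : ∀ x ∈ A, ∀ y ∈ A, x ∘L y ∈ A)
    (hAMM : ∀ a ∈ A, ∀ x ∈ M, ∀ y ∈ M, a ∘L (adjoint x ∘L y) ∈ A)
    {x y : K →L[ℂ] K} (hx : x ∈ clspan (sandwiches M A)) (hy : y ∈ clspan (sandwiches M A)) :
    x ∘L y ∈ clspan (sandwiches M A) := by
  refine Submodule.mul_mem_closure_span ?_ hx hy
  rintro _ ⟨m, hm, a, ha, n, hn, rfl⟩ _ ⟨m', hm', a', ha', n', hn', rfl⟩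
  exact Submodule.subset_span
    ⟨m, hm, (a ∘L (adjoint n ∘L m')) ∘L a', hAm _ (hAMM a ha n hn m' hm') a' ha', n', hn', rfl⟩

theorem comp_comp_adjoint_mem_clspan_sandwiches
    (hAMM : ∀ a ∈ A, ∀ x ∈ M, ∀ y ∈ M, a ∘L (adjoint x ∘L y) ∈ A)
    {x : K →L[ℂ] K} (hx : x ∈ clspan (sandwiches M A)) {n m : H →L[ℂ] K} (hn : n ∈ M)
    (hm : m ∈ M) : x ∘L (n ∘L adjoint m) ∈ clspan (sandwiches M A) := by
  refine Submodule.mul_mem_closure_span (t := {n ∘L adjoint m}) ?_ hx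
    (subset_closure (Submodule.subset_span rfl))
  rintro _ ⟨m₁, hm₁, a, ha, m₂, hm₂, rfl⟩ _ rfl
  exact Submodule.subset_span ⟨m₁, hm₁, a ∘L (adjoint m₂ ∘L n), hAMM a ha m₂ hm₂ n hn, m, hm, rfl⟩

theorem comp_mem_clspan_adjointSandwiches {B : Set (K →L[ℂ] K)}
    (hBm : ∀ x ∈ B, ∀ y ∈ B, x ∘L y ∈ B)
    (hBMM : ∀ b ∈ B, ∀ n ∈ M, ∀ m ∈ M, b ∘L (n ∘L adjoint m) ∈ B)
    {x y : H →L[ℂ] H} (hx : x ∈ clspan (adjointSandwiches M B))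
    (hy : y ∈ clspan (adjointSandwiches M B)) : x ∘L y ∈ clspan (adjointSandwiches M B) := by
  refine Submodule.mul_mem_closure_span ?_ hx hy
  rintro _ ⟨m, hm, b, hb, n, hn, rfl⟩ _ ⟨m', hm', b', hb', n', hn', rfl⟩
  exact Submodule.subset_span
    ⟨m, hm, (b ∘L (n ∘L adjoint m')) ∘L b', hBm _ (hBMM b hb n hn m' hm') b' hb', n', hn', rfl⟩

end Sandwich

theorem stmt_1_general {H K : Type*} [NormedAddCommGroup H] [InnerProductSpace ℂ H] [CompleteSpace H]
    [NormedAddCommGroup K] [InnerProductSpace ℂ K] [CompleteSpace K]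
    (A : Submodule ℂ (H →L[ℂ] H)) (M : Submodule ℂ (H →L[ℂ] K))
    (hAm : ∀ x ∈ A, ∀ y ∈ A, x ∘L y ∈ A)
    (hAMM : ∀ a ∈ A, ∀ x ∈ M, ∀ y ∈ M, a ∘L (adjoint x ∘L y) ∈ A)
    (B : Set (K →L[ℂ] K)) (A₀ : Set (H →L[ℂ] H))
    (hB : B = clspan {x : K →L[ℂ] K | ∃ m ∈ M, ∃ a ∈ A, ∃ n ∈ M, x = m ∘L a ∘L adjoint n})
    (hA₀ : A₀ = clspan {x : H →L[ℂ] H | ∃ m ∈ M, ∃ b ∈ B, ∃ n ∈ M, x = adjoint m ∘L b ∘L n}) :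
    IsClosed B ∧ (∀ x ∈ B, ∀ y ∈ B, x ∘L y ∈ B) ∧
    IsClosed A₀ ∧ (∀ x ∈ A₀, ∀ y ∈ A₀, x ∘L y ∈ A₀) := by
  replace hB : B = clspan (sandwiches (M : Set (H →L[ℂ] K)) (A : Set (H →L[ℂ] H))) := hB
  replace hA₀ : A₀ = clspan (adjointSandwiches (M : Set (H →L[ℂ] K)) B) := hA₀
  have hBm : ∀ x ∈ B, ∀ y ∈ B, x ∘L y ∈ B := by
    subst hB
    exact fun x hx y hy => comp_mem_clspan_sandwiches hAm hAMM hx hy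
  have hBMM : ∀ b ∈ B, ∀ n ∈ M, ∀ m ∈ M, b ∘L (n ∘L adjoint m) ∈ B := by
    subst hB
    exact fun b hb n hn m hm => comp_comp_adjoint_mem_clspan_sandwiches hAMM hb hn hm
  refine ⟨hB ▸ isClosed_closure, hBm, hA₀ ▸ isClosed_closure, ?_⟩
  subst hA₀
  exact fun x hx y hy => comp_mem_clspan_adjointSandwiches hBm hBMM hx hy

/-- If `A ⊆ B(H)` is an operator algebra with contractive approximate identity and
`M ⊆ B(H,K)` is a norm-closed TRO with `M* M A ⊆ A` and `A M* M ⊆ A`, then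
`B := clspan (M A M*)` is a norm-closed subalgebra of `B(K)` and `A₀ := clspan (M* B M)` is a
norm-closed subalgebra of `B(H)`. -/
theorem stmt_1 {H K : Type*} [NormedAddCommGroup H] [InnerProductSpace ℂ H] [CompleteSpace H]
    [NormedAddCommGroup K] [InnerProductSpace ℂ K] [CompleteSpace K]
    (A : Submodule ℂ (H →L[ℂ] H)) (M : Submodule ℂ (H →L[ℂ] K))
    (hAc : IsClosed (A : Set (H →L[ℂ] H))) (hAm : ∀ x ∈ A, ∀ y ∈ A, x ∘L y ∈ A)
    {ι : Type*} [Preorder ι] [IsDirected ι (· ≤ ·)] [Nonempty ι]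
    (e : ι → (H →L[ℂ] H)) (he : ∀ i, e i ∈ A) (hen : ∀ i, ‖e i‖ ≤ 1)
    (heL : ∀ x ∈ A, Tendsto (fun i => e i ∘L x) atTop (𝓝 x))
    (heR : ∀ x ∈ A, Tendsto (fun i => x ∘L e i) atTop (𝓝 x))
    (hMc : IsClosed (M : Set (H →L[ℂ] K)))
    (hMtro : ∀ x ∈ M, ∀ y ∈ M, ∀ z ∈ M, x ∘L (adjoint y ∘L z) ∈ M)
    (hMMA : ∀ x ∈ M, ∀ y ∈ M, ∀ a ∈ A, adjoint x ∘L (y ∘L a) ∈ A)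
    (hAMM : ∀ a ∈ A, ∀ x ∈ M, ∀ y ∈ M, a ∘L (adjoint x ∘L y) ∈ A)
    (B : Set (K →L[ℂ] K)) (A₀ : Set (H →L[ℂ] H))
    (hB : B = clspan {x : K →L[ℂ] K | ∃ m ∈ M, ∃ a ∈ A, ∃ n ∈ M, x = m ∘L a ∘L adjoint n})
    (hA₀ : A₀ = clspan {x : H →L[ℂ] H | ∃ m ∈ M, ∃ b ∈ B, ∃ n ∈ M, x = adjoint m ∘L b ∘L n}) :
    IsClosed B ∧ (∀ x ∈ B, ∀ y ∈ B, x ∘L y ∈ B) ∧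
    IsClosed A₀ ∧ (∀ x ∈ A₀, ∀ y ∈ A₀, x ∘L y ∈ A₀) :=
  stmt_1_general A M hAm hAMM B A₀ hB hA₀
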